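/- Let v = (v_1,…,v_{n−1}) and w = (w_1,…,w_{m−1}) be two lists of nonnegative integers. Then (Σ_{β ⊨ n} q^{v(set(β))} r_β) · (Σ_{γ ⊨ m} q^{w(set(γ))} r_γ) = Σ_{α ⊨ n+m} q^{(v,0,w)(set(α))} r_α, where (v,0,w) denotes the list of length n+m−1 obtained by concatenating v, a single 0, and w. -/

import Mathlib

open scoped Classical

noncomputable section

/-- The monomial `x_{κ(1)} ⋯ x_{κ(n)}` recording the colors of vertices `1, …, n`,
as an exponent vector. -/
def colMono (n : ℕ) (κ : ℕ → ℕ) : ℕ →₀ ℕ :=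
  ∑ v ∈ Finset.Icc 1 n, Finsupp.single (κ v) 1

/-- A coloring `κ : [n] → ℕ`, normalized to be `0` outside of `[n] = {1, …, n}`. -/
def Supported (n : ℕ) (κ : ℕ → ℕ) : Prop :=
  ∀ v, v < 1 ∨ n < v → κ v = 0

/-- The number of ascents of a coloring `κ`: edges `(i,j) ∈ E` with `i < j` and `κ i < κ j`. -/
def asc (E : Finset (ℕ × ℕ)) (κ : ℕ → ℕ) : ℕ :=
  (E.filter fun e => e.1 < e.2 ∧ κ e.1 < κ e.2).card

/-- The unicellular LLT polynomial of a graph with vertex set `[n]` and edge set `E`: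
`LLT = Σ_κ q^{asc κ} x_{κ(1)} ⋯ x_{κ(n)}`, a power series in `x_0, x_1, x_2, …` with
coefficients in `ℤ[q]` (where `q = Polynomial.X`). -/
def LLT (n : ℕ) (E : Finset (ℕ × ℕ)) : MvPowerSeries ℕ (Polynomial ℤ) :=
  fun d => ∑ᶠ κ : ℕ → ℕ,
    if Supported n κ ∧ colMono n κ = d then (Polynomial.X : Polynomial ℤ) ^ asc E κ else 0

/-- `set(α) = {α₁, α₁+α₂, …, α₁+⋯+α_{ℓ-1}} ⊆ [n-1]` for a composition `α ⊨ n`. -/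
def compSet {n : ℕ} (c : Composition n) : Finset ℕ :=
  (Finset.Ico 1 c.length).image c.sizeUpTo

/-- The condition on a coloring `κ : [n] → ℕ` in the definition of the ribbon Schur
function `r_α`: `κ(i) < κ(i+1)` if `i ∈ set(α)` and `κ(i) ≥ κ(i+1)` otherwise. -/
def RibbonCond (n : ℕ) {N : ℕ} (c : Composition N) (κ : ℕ → ℕ) : Prop :=
  ∀ i, 1 ≤ i → i ≤ n - 1 →
    (i ∈ compSet c → κ i < κ (i + 1)) ∧ (i ∉ compSet c → κ (i + 1) ≤ κ i)

/-- The ribbon Schur function `r_α` of a composition `α ⊨ n`, as a power series in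
`x_0, x_1, x_2, …` with coefficients in `ℤ[q]`. -/
def ribbon {n : ℕ} (c : Composition n) : MvPowerSeries ℕ (Polynomial ℤ) :=
  fun d => ∑ᶠ κ : ℕ → ℕ,
    if Supported n κ ∧ colMono n κ = d ∧ RibbonCond n c κ then 1 else 0

/-- `v(S) = Σ_{s ∈ S} v_s`. -/
def wt (v : ℕ → ℕ) (S : Finset ℕ) : ℕ := ∑ s ∈ S, v s

/-- `Σ_{α ⊨ n} q^{v(set(α))} r_α`. -/
def qRibbonSum (n : ℕ) (v : ℕ → ℕ) : MvPowerSeries ℕ (Polynomial ℤ) :=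
  ∑ α : Composition n, (Polynomial.X : Polynomial ℤ) ^ wt v (compSet α) • ribbon α

/-- Edge set of the path `P_n`: edges `(i, i+1)` for `1 ≤ i ≤ n-1`. -/
def pathEdges (n : ℕ) : Finset (ℕ × ℕ) :=
  (Finset.Icc 1 (n - 1)).image fun i => (i, i + 1)

/-- Edge set of the complete graph `K_m`: edges `(i, j)` for `1 ≤ i < j ≤ m`. -/
def completeEdges (m : ℕ) : Finset (ℕ × ℕ) :=
  ((Finset.Icc 1 m) ×ˢ (Finset.Icc 1 m)).filter fun e => e.1 < e.2

/-- Edge set of the melting complete graph `K_m^{(k)}`: `K_m` with the `k` edges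
`(1,m), (1,m-1), …, (1,m-k+1)` removed. -/
def meltingCompleteEdges (m k : ℕ) : Finset (ℕ × ℕ) :=
  completeEdges m \ ((Finset.Icc (m - k + 1) m).image fun j => (1, j))

/-- Edge set of the concatenation `G + H`, where `G` has `n` vertices:
`E(G) ∪ {(i+n-1, j+n-1) : (i,j) ∈ E(H)}`. -/
def concatEdges (n : ℕ) (EG EH : Finset (ℕ × ℕ)) : Finset (ℕ × ℕ) :=
  EG ∪ EH.image fun e => (e.1 + n - 1, e.2 + n - 1)

/-- Edge set of the melting lollipop graph `L_{m,n}^{(k)} = P_{n+1} + K_m^{(k)}`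
on `n + m` vertices. -/
def lollipopEdges (m n k : ℕ) : Finset (ℕ × ℕ) :=
  concatEdges (n + 1) (pathEdges (n + 1)) (meltingCompleteEdges m k)

/-- The area sequence of the graph with edge set `E`:
`a_i = max({0} ∪ {j - i : (i,j) ∈ E})`. -/
def areaSeq (E : Finset (ℕ × ℕ)) (i : ℕ) : ℕ :=
  (E.filter fun e => e.1 = i).sup fun e => e.2 - e.1

/-- Edge set of the reverse `Gʳ` of a graph `G` on `n` vertices:
`{(n+1-j, n+1-i) : (i,j) ∈ E(G)}`. -/
def reverseEdges (n : ℕ) (E : Finset (ℕ × ℕ)) : Finset (ℕ × ℕ) :=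
  E.image fun e => (n + 1 - e.2, n + 1 - e.1)

/-- Edge set of the two-headed melting lollipop graph
`⁽ᵏ¹⁾ₘ₁L_{m₂,n}^{(k₂)} = (K_{m₁}^{(k₁)})ʳ + P_{n+2} + K_{m₂}^{(k₂)}`,
where `np1 = n + 1` (so that `n ≥ -1` is allowed). It has `m₁ + n + m₂` vertices. -/
def twoHeadedEdges (m1 k1 np1 m2 k2 : ℕ) : Finset (ℕ × ℕ) :=
  concatEdges (m1 + np1)
    (concatEdges m1 (reverseEdges m1 (meltingCompleteEdges m1 k1)) (pathEdges (np1 + 1)))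
    (meltingCompleteEdges m2 k2)

/-- `E` is the edge set of a unit interval graph on vertex set `[N] = {1, …, N}`:
edges `(i,j)` satisfy `1 ≤ i < j ≤ N`, and if `(i,j) ∈ E` and `i ≤ k < l ≤ j`
then `(k,l) ∈ E`. -/
def IsUnitInterval (N : ℕ) (E : Finset (ℕ × ℕ)) : Prop :=
  (∀ e ∈ E, 1 ≤ e.1 ∧ e.1 < e.2 ∧ e.2 ≤ N) ∧
  ∀ i j k l : ℕ, (i, j) ∈ E → i ≤ k → k < l → l ≤ j → (k, l) ∈ E

/-- `a` is the area sequence of some unit interval graph on `N` vertices. -/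
def IsAreaSeq (N : ℕ) (a : ℕ → ℕ) : Prop :=
  ∃ E : Finset (ℕ × ℕ), IsUnitInterval N E ∧ ∀ i, a i = areaSeq E i

/-- The unit interval graph determined by an area sequence `a` on `N` vertices:
edges `(i, j)` with `i < j ≤ i + a_i`. -/
def graphOfArea (N : ℕ) (a : ℕ → ℕ) : Finset (ℕ × ℕ) :=
  ((Finset.Icc 1 N) ×ˢ (Finset.Icc 1 N)).filter fun e => e.1 < e.2 ∧ e.2 ≤ e.1 + a e.1

/-- The unicellular LLT polynomial of an area sequence `a` on `N` vertices. -/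
def LLTarea (N : ℕ) (a : ℕ → ℕ) : MvPowerSeries ℕ (Polynomial ℤ) :=
  LLT N (graphOfArea N a)

/-- A standard Young tableau of shape `μ`: a filling of the cells of `μ` with
`1, …, |μ|` each occurring exactly once, strictly increasing along rows and columns
(and `0` outside `μ`). -/
structure StandardYT (μ : YoungDiagram) where
  entry : ℕ × ℕ → ℕ
  bijOn : Set.BijOn entry ↑μ.cells (Set.Icc 1 μ.card)
  zeros : ∀ c ∉ μ.cells, entry c = 0
  row_lt : ∀ i j1 j2 : ℕ, j1 < j2 → (i, j2) ∈ μ → entry (i, j1) < entry (i, j2)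
  col_lt : ∀ i1 i2 j : ℕ, i1 < i2 → (i2, j) ∈ μ → entry (i1, j) < entry (i2, j)

/-- The descent set `D(T) ⊆ [N-1]` of a standard Young tableau `T`: those `k` such that
`k + 1` lies in a strictly later row than `k`. -/
def descents {μ : YoungDiagram} (T : StandardYT μ) : Finset ℕ :=
  (Finset.Icc 1 (μ.card - 1)).filter fun k =>
    ∃ c1 ∈ μ.cells, ∃ c2 ∈ μ.cells,
      T.entry c1 = k ∧ T.entry c2 = k + 1 ∧ c1.1 < c2.1

/-- The weight (exponent vector) `x^T` of a semistandard Young tableau. -/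
def ssytWeight {μ : YoungDiagram} (T : SemistandardYoungTableau μ) : ℕ →₀ ℕ :=
  ∑ c ∈ μ.cells, Finsupp.single (T c.1 c.2) 1

/-- The Schur function `s_μ = Σ_T x^T`, the sum over all semistandard Young tableaux
of shape `μ`, as a power series in `x_0, x_1, x_2, …` with coefficients in `ℤ[q]`. -/
def schur (μ : YoungDiagram) : MvPowerSeries ℕ (Polynomial ℤ) :=
  fun d => ∑ᶠ T : SemistandardYoungTableau μ, if ssytWeight T = d then 1 else 0

/-- `Σ_{λ ⊢ N} Σ_{T ∈ SYT(λ)} q^{b(D(T))} s_λ`, where partitions `λ ⊢ N` are identified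
with Young diagrams with `N` cells. -/
def descentSchurSum (N : ℕ) (b : ℕ → ℕ) : MvPowerSeries ℕ (Polynomial ℤ) :=
  ∑ᶠ (μ : YoungDiagram) (_ : μ.card = N) (T : StandardYT μ),
    (Polynomial.X : Polynomial ℤ) ^ wt b (descents T) • schur μ

/-!
Each coloring `κ` of `[n]` satisfies the ribbon condition of exactly one composition, namely the
one whose set is the ascent set of `κ`; hence `Σ_α q^{v(set α)} r_α = Σ_κ q^{v(Asc κ)} x^κ`.
A coloring of `[n+m]` is a coloring of `[n]` followed by a coloring of `[m]`, and its ascent set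
consists of the ascents of the first, the ascents of the second shifted by `n`, and possibly
the junction `n`, which `(v,0,w)` weights by `0`.
-/

open Finset

lemma compSet_subset_Icc {n : ℕ} (c : Composition n) : compSet c ⊆ Icc 1 (n - 1) := by
  simp only [compSet, subset_iff, mem_image, mem_Ico, mem_Icc]
  rintro _ ⟨i, ⟨hi1, hi2⟩, rfl⟩
  have h1 : c.sizeUpTo 0 < c.sizeUpTo i :=
    (c.sizeUpTo_strict_mono (by omega)).trans_le (c.monotone_sizeUpTo hi1)
  have h2 : c.sizeUpTo i < n := (c.sizeUpTo_strict_mono hi2).trans_le (c.sizeUpTo_le _)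
  rw [c.sizeUpTo_zero] at h1
  omega

def compositionEquivFinset (n : ℕ) : Composition n ≃ Finset (Fin (n - 1)) :=
  (compositionEquiv n).trans (compositionAsSetEquiv n)

lemma mem_compositionEquivFinset_iff {n : ℕ} (c : Composition n) (i : Fin (n - 1)) :
    i ∈ compositionEquivFinset n c ↔ (i : ℕ) + 1 ∈ compSet c := by
  have hi := i.2
  simp only [compositionEquivFinset, compositionEquiv, compositionAsSetEquiv, Equiv.trans_apply,
    Equiv.coe_fn_mk, Set.mem_toFinset, Set.mem_ofPred_eq, Composition.toCompositionAsSet_boundaries,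
    Composition.boundaries, mem_map, mem_univ, true_and, compSet, mem_image, mem_Ico,
    Composition.boundary, RelEmbedding.coe_toEmbedding, OrderEmbedding.coe_ofStrictMono,
    Fin.ext_iff]
  constructor
  · rintro ⟨j, hj⟩
    refine ⟨j, ⟨Nat.pos_of_ne_zero fun h0 => ?_,
      lt_of_le_of_ne (Nat.lt_succ_iff.1 j.2) fun hl => ?_⟩, by omega⟩
    · rw [h0, c.sizeUpTo_zero] at hj; omega
    · rw [hl, c.sizeUpTo_length] at hj; omega
  · rintro ⟨j, ⟨-, hj⟩, hs⟩
    exact ⟨⟨j, by omega⟩, by simp only; omega⟩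

lemma compSet_eq_iff {n : ℕ} {S : Finset ℕ} (hS : S ⊆ Icc 1 (n - 1)) (c : Composition n) :
    compSet c = S ↔ c = (compositionEquivFinset n).symm {i | (i : ℕ) + 1 ∈ S} := by
  rw [Equiv.eq_symm_apply]
  constructor
  · rintro rfl
    ext i
    simp [mem_compositionEquivFinset_iff]
  · intro h
    ext k
    by_cases hk : k ∈ Icc 1 (n - 1)
    · rw [mem_Icc] at hk
      have := mem_compositionEquivFinset_iff c ⟨k - 1, by omega⟩
      rw [h, mem_filter] at this
      simp only [mem_univ, true_and, Nat.sub_add_cancel hk.1] at this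
      exact this.symm
    · exact iff_of_false (fun h' => hk (compSet_subset_Icc c h')) fun h' => hk (hS h')

lemma apply_mem_support_colMono {n i : ℕ} (κ : ℕ → ℕ) (hi : i ∈ Icc 1 n) :
    κ i ∈ (colMono n κ).support := by
  rw [Finsupp.mem_support_iff, colMono, Finsupp.finsetSum_apply]
  exact (sum_pos' (fun _ _ => Nat.zero_le _) ⟨i, hi, by simp⟩).ne'

lemma finite_setOf_supported_colMono_eq (n : ℕ) (d : ℕ →₀ ℕ) :
    {κ | Supported n κ ∧ colMono n κ = d}.Finite := by
  refine Set.Finite.of_finite_image (f := fun κ (i : Fin (n + 1)) => κ i) ?_ ?_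
  · refine (Set.Finite.pi (t := fun _ => insert 0 (d.support : Set ℕ))
      fun _ => (d.support.finite_toSet.insert 0)).subset ?_
    rintro _ ⟨κ, ⟨hκ, rfl⟩, rfl⟩ i -
    by_cases h : (i : ℕ) = 0
    · exact Or.inl (hκ _ (Or.inl (by omega)))
    · exact Or.inr (apply_mem_support_colMono κ (mem_Icc.2 ⟨by omega, by omega⟩))
  · intro κ hκ κ' hκ' h
    funext i
    by_cases hi : i ≤ n
    · exact congrFun h ⟨i, by omega⟩
    · rw [hκ.1 i (Or.inr (by omega)), hκ'.1 i (Or.inr (by omega))]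

def colorings (n : ℕ) (d : ℕ →₀ ℕ) : Finset (ℕ → ℕ) :=
  (finite_setOf_supported_colMono_eq n d).toFinset

lemma mem_colorings {n : ℕ} {d : ℕ →₀ ℕ} {κ : ℕ → ℕ} :
    κ ∈ colorings n d ↔ Supported n κ ∧ colMono n κ = d :=
  Set.Finite.mem_toFinset _

lemma coeff_ribbon {N : ℕ} (α : Composition N) (d : ℕ →₀ ℕ) :
    MvPowerSeries.coeff d (ribbon α) = ∑ κ ∈ colorings N d with RibbonCond N α κ, 1 := by
  rw [sum_filter]
  refine (finsum_eq_sum_of_support_subset _ fun κ hκ => ?_).trans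
    (sum_congr rfl fun κ hκ => ?_)
  · obtain ⟨⟨h₁, h₂, -⟩, -⟩ := ite_ne_right_iff.1 hκ
    exact mem_colorings.2 ⟨h₁, h₂⟩
  · simp only [mem_colorings.1 hκ, true_and]

def ascSet (n : ℕ) (κ : ℕ → ℕ) : Finset ℕ :=
  {i ∈ Icc 1 (n - 1) | κ i < κ (i + 1)}

lemma ascSet_subset_Icc (n : ℕ) (κ : ℕ → ℕ) : ascSet n κ ⊆ Icc 1 (n - 1) :=
  filter_subset _ _

lemma ribbonCond_iff_compSet_eq {n : ℕ} (c : Composition n) (κ : ℕ → ℕ) :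
    RibbonCond n c κ ↔ compSet c = ascSet n κ := by
  constructor
  · intro h
    ext i
    rw [ascSet, mem_filter]
    refine ⟨fun hi => ⟨compSet_subset_Icc c hi, ?_⟩, fun ⟨hi, hlt⟩ => ?_⟩
    · have hi' := mem_Icc.1 (compSet_subset_Icc c hi)
      exact (h i hi'.1 hi'.2).1 hi
    · rw [mem_Icc] at hi
      by_contra hmem
      exact (h i hi.1 hi.2).2 hmem |>.not_gt hlt
  · rintro h i h1 h2
    simp only [h, ascSet, mem_filter, mem_Icc, h1, h2, and_self, true_and, not_lt, imp_self]

lemma coeff_qRibbonSum (n : ℕ) (v : ℕ → ℕ) (d : ℕ →₀ ℕ) :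
    MvPowerSeries.coeff d (qRibbonSum n v) =
      ∑ κ ∈ colorings n d, (Polynomial.X : Polynomial ℤ) ^ wt v (ascSet n κ) := by
  calc MvPowerSeries.coeff d (qRibbonSum n v)
      = ∑ α : Composition n, ∑ κ ∈ colorings n d with RibbonCond n α κ,
          (Polynomial.X : Polynomial ℤ) ^ wt v (compSet α) := by
        simp only [qRibbonSum, map_sum, MvPowerSeries.coeff_smul, coeff_ribbon, mul_sum, mul_one]
    _ = ∑ κ ∈ colorings n d, ∑ α with compSet α = ascSet n κ,
          (Polynomial.X : Polynomial ℤ) ^ wt v (compSet α) :=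
        sum_comm' fun α κ => by simp [ribbonCond_iff_compSet_eq, and_comm]
    _ = _ := by
        refine sum_congr rfl fun κ _ => ?_
        have hS := ascSet_subset_Icc n κ
        simp_rw [compSet_eq_iff hS, filter_eq', if_pos (mem_univ _), sum_singleton]
        rw [(compSet_eq_iff hS _).2 rfl]

lemma colMono_eq_sum_range (n : ℕ) (κ : ℕ → ℕ) :
    colMono n κ = ∑ i ∈ range n, Finsupp.single (κ (i + 1)) 1 := by
  rw [colMono, range_eq_Ico, sum_Ico_add' (fun i => Finsupp.single (κ i) 1)]
  rfl

lemma wt_eq_wt_filter_lt_add_wt_filter_gt {u : ℕ → ℕ} {n : ℕ} (hu : u n = 0) (S : Finset ℕ) :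
    wt u S = wt u {i ∈ S | i < n} + wt u {i ∈ S | n < i} := by
  rw [wt, ← sum_filter_of_ne (p := (· ≠ n)) fun i _ h hi => h (hi ▸ hu),
    ← sum_filter_add_sum_filter_not _ (· < n), filter_filter, filter_filter, wt, wt]
  congr 2 <;> exact filter_congr fun i _ => by omega

def joinCol (n : ℕ) (κ₁ κ₂ : ℕ → ℕ) : ℕ → ℕ := fun i => if i ≤ n then κ₁ i else κ₂ (i - n)

def leftCol (n : ℕ) (κ : ℕ → ℕ) : ℕ → ℕ := fun i => if i ≤ n then κ i else 0

def rightCol (n : ℕ) (κ : ℕ → ℕ) : ℕ → ℕ := fun j => if j = 0 then 0 else κ (j + n)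

section joinCol

variable {n m : ℕ} {κ κ₁ κ₂ : ℕ → ℕ}

lemma colMono_joinCol : colMono (n + m) (joinCol n κ₁ κ₂) = colMono n κ₁ + colMono m κ₂ := by
  simp only [colMono_eq_sum_range, sum_range_add, joinCol]
  congr 1
  · exact sum_congr rfl fun i hi => by rw [if_pos (by simp at hi; omega)]
  · exact sum_congr rfl fun i _ => by rw [if_neg (by omega)]; congr 3; omega

lemma supported_joinCol (h₁ : Supported n κ₁) (h₂ : Supported m κ₂) :
    Supported (n + m) (joinCol n κ₁ κ₂) := by
  intro i hi
  by_cases h : i ≤ n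
  · rw [joinCol, if_pos h]; exact h₁ i (by omega)
  · rw [joinCol, if_neg h]; exact h₂ _ (by omega)

lemma supported_leftCol (h : Supported (n + m) κ) : Supported n (leftCol n κ) := by
  intro i hi
  unfold leftCol
  split_ifs with hin
  · exact h i (by omega)
  · rfl

lemma supported_rightCol (h : Supported (n + m) κ) : Supported m (rightCol n κ) := by
  intro j hj
  unfold rightCol
  split_ifs with hj0
  · rfl
  · exact h _ (by omega)

lemma joinCol_leftCol_rightCol : joinCol n (leftCol n κ) (rightCol n κ) = κ := by
  funext i
  by_cases hi : i ≤ n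
  · simp [joinCol, leftCol, hi]
  · simp only [joinCol, leftCol, rightCol, if_neg hi, if_neg (by omega : i - n ≠ 0)]
    congr 1
    omega

lemma leftCol_joinCol (h₁ : Supported n κ₁) : leftCol n (joinCol n κ₁ κ₂) = κ₁ := by
  funext i
  by_cases hi : i ≤ n
  · simp [leftCol, joinCol, hi]
  · simp only [leftCol, if_neg hi]
    exact (h₁ i (Or.inr (by omega))).symm

lemma rightCol_joinCol (h₂ : Supported m κ₂) : rightCol n (joinCol n κ₁ κ₂) = κ₂ := by
  funext j
  by_cases hj : j = 0
  · simp only [rightCol, if_pos hj]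
    exact (h₂ j (Or.inl (by omega))).symm
  · simp only [rightCol, joinCol, if_neg hj, if_neg (by omega : ¬ j + n ≤ n), Nat.add_sub_cancel]

lemma sum_colorings_add {M : Type*} [AddCommMonoid M] (d : ℕ →₀ ℕ) (f : (ℕ → ℕ) → M) :
    ∑ κ ∈ colorings (n + m) d, f κ =
      ∑ p ∈ antidiagonal d, ∑ κ₁ ∈ colorings n p.1, ∑ κ₂ ∈ colorings m p.2,
        f (joinCol n κ₁ κ₂) := by
  simp_rw [← sum_product' (f := fun κ₁ κ₂ => f (joinCol n κ₁ κ₂)), sum_sigma']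
  symm
  apply sum_nbij' (fun y => joinCol n y.2.1 y.2.2)
    (fun κ => ⟨(colMono n (leftCol n κ), colMono m (rightCol n κ)), (leftCol n κ, rightCol n κ)⟩)
  · rintro ⟨p, κ₁, κ₂⟩ hy
    simp only [mem_sigma, mem_product, HasAntidiagonal.mem_antidiagonal, mem_colorings] at hy ⊢
    obtain ⟨hp, ⟨hs₁, hc₁⟩, hs₂, hc₂⟩ := hy
    exact ⟨supported_joinCol hs₁ hs₂, by rw [colMono_joinCol, hc₁, hc₂, hp]⟩
  · intro κ hκ
    simp only [mem_sigma, mem_product, HasAntidiagonal.mem_antidiagonal, mem_colorings,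
      and_true] at hκ ⊢
    refine ⟨?_, supported_leftCol hκ.1, supported_rightCol hκ.1⟩
    rw [← colMono_joinCol, joinCol_leftCol_rightCol, hκ.2]
  · rintro ⟨⟨p₁, p₂⟩, κ₁, κ₂⟩ hy
    simp only [mem_sigma, mem_product, mem_colorings] at hy
    obtain ⟨-, ⟨hs₁, rfl⟩, hs₂, rfl⟩ := hy
    simp only [leftCol_joinCol hs₁, rightCol_joinCol hs₂]
  · exact fun κ _ => joinCol_leftCol_rightCol
  · exact fun _ _ => rfl

lemma filter_lt_ascSet_joinCol :
    {i ∈ ascSet (n + m) (joinCol n κ₁ κ₂) | i < n} = ascSet n κ₁ := by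
  ext i
  simp only [ascSet, mem_filter, mem_Icc]
  simp only [joinCol]
  constructor
  · rintro ⟨⟨hi, hlt⟩, hin⟩
    rw [if_pos (by omega), if_pos (by omega)] at hlt
    exact ⟨⟨hi.1, by omega⟩, hlt⟩
  · rintro ⟨hi, hlt⟩
    refine ⟨⟨by omega, ?_⟩, by omega⟩
    rwa [if_pos (by omega), if_pos (by omega)]

lemma filter_gt_ascSet_joinCol :
    {i ∈ ascSet (n + m) (joinCol n κ₁ κ₂) | n < i} = (ascSet m κ₂).map (addRightEmbedding n) := by
  ext i
  simp only [ascSet, mem_filter, mem_map, mem_Icc, addRightEmbedding_apply]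
  simp only [joinCol]
  constructor
  · rintro ⟨⟨hi, hlt⟩, hni⟩
    rw [if_neg (by omega), if_neg (by omega)] at hlt
    refine ⟨i - n, ⟨⟨by omega, by omega⟩, ?_⟩, by omega⟩
    rwa [show i - n + 1 = i + 1 - n by omega]
  · rintro ⟨j, ⟨hj, hlt⟩, rfl⟩
    refine ⟨⟨by omega, ?_⟩, by omega⟩
    rwa [if_neg (by omega), if_neg (by omega), Nat.add_sub_cancel,
      show j + n + 1 - n = j + 1 by omega]

lemma wt_ascSet_joinCol {v w u : ℕ → ℕ}
    (hu : ∀ i, u i = if i < n then v i else if i = n then 0 else w (i - n)) :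
    wt u (ascSet (n + m) (joinCol n κ₁ κ₂)) = wt v (ascSet n κ₁) + wt w (ascSet m κ₂) := by
  have hun : u n = 0 := by rw [hu, if_neg (lt_irrefl n), if_pos rfl]
  rw [wt_eq_wt_filter_lt_add_wt_filter_gt hun, filter_lt_ascSet_joinCol,
    filter_gt_ascSet_joinCol, wt, wt, wt, wt, sum_map]
  congr 1
  · refine sum_congr rfl fun i hi => ?_
    have := mem_Icc.1 (ascSet_subset_Icc n κ₁ hi)
    rw [hu, if_pos (by omega)]
  · refine sum_congr rfl fun j hj => ?_
    have := mem_Icc.1 (ascSet_subset_Icc m κ₂ hj)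
    rw [addRightEmbedding_apply, hu, if_neg (by omega), if_neg (by omega), Nat.add_sub_cancel]

end joinCol

theorem qRibbonSum_mul_general (n m : ℕ) (v w u : ℕ → ℕ)
    (hu : ∀ i, u i = if i < n then v i else if i = n then 0 else w (i - n)) :
    qRibbonSum n v * qRibbonSum m w = qRibbonSum (n + m) u := by
  refine MvPowerSeries.ext fun d => ?_
  rw [MvPowerSeries.coeff_mul, coeff_qRibbonSum, sum_colorings_add]
  refine sum_congr rfl fun p _ => ?_
  rw [coeff_qRibbonSum, coeff_qRibbonSum, sum_mul_sum]
  simp only [wt_ascSet_joinCol hu, pow_add]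

/-- Lemma `lemma:union`. For lists `v = (v_1, …, v_{n-1})` and
`w = (w_1, …, w_{m-1})` of nonnegative integers,
`(Σ_{β ⊨ n} q^{v(set β)} r_β) (Σ_{γ ⊨ m} q^{w(set γ)} r_γ) = Σ_{α ⊨ n+m} q^{(v,0,w)(set α)} r_α`,
where `(v,0,w)` is the concatenated list of length `n+m-1`. -/
theorem qRibbonSum_mul (n m : ℕ) (hn : 1 ≤ n) (hm : 1 ≤ m) (v w u : ℕ → ℕ)
    (hu : ∀ i, u i = if i < n then v i else if i = n then 0 else w (i - n)) :
    qRibbonSum n v * qRibbonSum m w = qRibbonSum (n + m) u :=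
  qRibbonSum_mul_general n m v w u hu
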